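/- arXiv:2009.10379 — 7 statements merged into one kernel-verified Lean document; each statement's English description precedes it below -/
import Mathlib

section
/- If the matrices D₀ and D₁ satisfy D₀ᵀD₀ ⪯ I_{N−k} and D₁ᵀD₁ ⪯ I_k (i.e. I_{N−k} − D₀ᵀD₀ and I_k − D₁ᵀD₁ are positive semidefinite), then the transport operator S is dissipative on admissible functions: for every admissible w ∈ C¹([0,1]; ℝ^N), ∫₀¹ (−Λ w′(x))ᵀ Λ̃ w(x) dx ≤ 0. -/
open MeasureTheory
open scoped Matrix

/-!
Along each characteristic the weight `1/|λᵢ|` cancels the speed `λᵢ` up to its sign, so the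
integrand is the derivative of `(|w⁻|² - |w⁺|²)/2` and the integral equals
`(|w⁻(1)|² - |w⁺(1)|²)/2 + (|w⁺(0)|² - |w⁻(0)|²)/2`. Both brackets are nonpositive because
`w⁻(1) = D₁ w⁺(1)`, `w⁺(0) = D₀ w⁻(0)` and `D₀`, `D₁` are contractions.
-/

lemma Matrix.dotProduct_mulVec_self_le {m n : Type*} [Fintype m] [Fintype n] [DecidableEq n]
    (A : Matrix m n ℝ) (hA : (1 - Aᵀ * A).PosSemidef) (v : n → ℝ) :
    A *ᵥ v ⬝ᵥ A *ᵥ v ≤ v ⬝ᵥ v := by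
  have h := hA.dotProduct_mulVec_nonneg v
  rw [Matrix.sub_mulVec, Matrix.one_mulVec, dotProduct_sub, ← Matrix.mulVec_mulVec,
    Matrix.dotProduct_mulVec, Matrix.vecMul_transpose] at h
  simpa [star_trivial] using h

section WeightedTerms

variable {ι : Type*} [Fintype ι] (c a b : ι → ℝ)

lemma sum_neg_mul_mul_one_div_abs_of_pos (hc : ∀ i, 0 < c i) :
    ∑ i, -(c i * a i) * (1 / |c i| * b i) = -(a ⬝ᵥ b) := by
  rw [dotProduct, ← Finset.sum_neg_distrib]
  refine Finset.sum_congr rfl fun i _ => ?_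
  rw [abs_of_pos (hc i)]
  field_simp [(hc i).ne']

lemma sum_neg_mul_mul_one_div_abs_of_neg (hc : ∀ i, c i < 0) :
    ∑ i, -(c i * a i) * (1 / |c i| * b i) = a ⬝ᵥ b := by
  refine Finset.sum_congr rfl fun i _ => ?_
  rw [abs_of_neg (hc i)]
  field_simp [(hc i).ne]

end WeightedTerms

section Energy

variable {ι : Type*} [Fintype ι] {a b : ℝ} {w w' : ℝ → ι → ℝ}

lemma intervalIntegrable_dotProduct_deriv_self (hab : a ≤ b)
    (hw : ∀ i, ∀ x ∈ Set.Icc a b, HasDerivWithinAt (fun t => w t i) (w' x i) (Set.Icc a b) x)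
    (hw' : ∀ i, ContinuousOn (fun t => w' t i) (Set.Icc a b)) :
    IntervalIntegrable (fun x => w' x ⬝ᵥ w x) volume a b := by
  refine ContinuousOn.intervalIntegrable ?_
  rw [Set.uIcc_of_le hab]
  exact continuousOn_finsetSum _ fun i _ =>
    (hw' i).mul fun x hx => (hw i x hx).continuousWithinAt

theorem integral_dotProduct_deriv_self (hab : a ≤ b)
    (hw : ∀ i, ∀ x ∈ Set.Icc a b, HasDerivWithinAt (fun t => w t i) (w' x i) (Set.Icc a b) x)
    (hw' : ∀ i, ContinuousOn (fun t => w' t i) (Set.Icc a b)) :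
    ∫ x in a..b, w' x ⬝ᵥ w x = (w b ⬝ᵥ w b - w a ⬝ᵥ w a) / 2 := by
  have hderiv : ∀ x ∈ Set.Icc a b,
      HasDerivWithinAt (fun t => w t ⬝ᵥ w t / 2) (w' x ⬝ᵥ w x) (Set.Icc a b) x := by
    intro x hx
    have hsum : HasDerivWithinAt (fun t => w t ⬝ᵥ w t) (2 * (w' x ⬝ᵥ w x)) (Set.Icc a b) x := by
      refine (HasDerivWithinAt.fun_sum (u := Finset.univ) (A := fun i t => w t i * w t i)
        fun i _ => (hw i x hx).mul (hw i x hx)).congr_deriv ?_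
      simp only [dotProduct, Finset.mul_sum]
      exact Finset.sum_congr rfl fun i _ => by ring
    exact (hsum.div_const 2).congr_deriv (by ring)
  rw [intervalIntegral.integral_eq_sub_of_hasDeriv_right_of_le hab
    (fun x hx => (hderiv x hx).continuousWithinAt)
    (fun x hx => ((hderiv x (Set.Ioo_subset_Icc_self hx)).hasDerivAt
      (Icc_mem_nhds hx.1 hx.2)).hasDerivWithinAt)
    (intervalIntegrable_dotProduct_deriv_self hab hw hw')]
  ring

end Energy

/-- If `D₀ᵀD₀ ⪯ I` and `D₁ᵀD₁ ⪯ I`, then the transport operator `Sw = -Λw'` is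
dissipative on admissible C¹ functions, i.e. `⟨Sw, w⟩_H ≤ 0` for the weighted inner
product `⟨w₁,w₂⟩ = ∫₀¹ w₁ᵀ Λ̃ w₂`. The state `w` is split into its first `k` components
`wp` (speeds `lp i > 0`) and its last `N - k = l` components `wm` (speeds `lm j < 0`). -/
theorem statement6 (k l : ℕ) (lp : Fin k → ℝ) (lm : Fin l → ℝ)
    (hlp : ∀ i, 0 < lp i) (hlm : ∀ j, lm j < 0)
    (D₀ : Matrix (Fin k) (Fin l) ℝ) (D₁ : Matrix (Fin l) (Fin k) ℝ)
    -- D₀ᵀD₀ ⪯ I and D₁ᵀD₁ ⪯ I :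
    (hD₀ : ((1 : Matrix (Fin l) (Fin l) ℝ) - D₀.transpose * D₀).PosSemidef)
    (hD₁ : ((1 : Matrix (Fin k) (Fin k) ℝ) - D₁.transpose * D₁).PosSemidef)
    (wp wp' : ℝ → Fin k → ℝ) (wm wm' : ℝ → Fin l → ℝ)
    -- `w` is C¹ on [0,1] with derivative `(wp', wm')`:
    (hwp : ∀ i, ∀ x ∈ Set.Icc (0:ℝ) 1,
      HasDerivWithinAt (fun t => wp t i) (wp' x i) (Set.Icc 0 1) x)
    (hwm : ∀ j, ∀ x ∈ Set.Icc (0:ℝ) 1,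
      HasDerivWithinAt (fun t => wm t j) (wm' x j) (Set.Icc 0 1) x)
    (hwp' : ∀ i, ContinuousOn (fun t => wp' t i) (Set.Icc 0 1))
    (hwm' : ∀ j, ContinuousOn (fun t => wm' t j) (Set.Icc 0 1))
    -- boundary conditions (admissibility):
    (hb0 : wp 0 = D₀.mulVec (wm 0))
    (hb1 : wm 1 = D₁.mulVec (wp 1)) :
    (∫ x in (0:ℝ)..1,
        ((∑ i, (-(lp i * wp' x i)) * ((1 / |lp i|) * wp x i)) +
          ∑ j, (-(lm j * wm' x j)) * ((1 / |lm j|) * wm x j))) ≤ 0 := by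
  have hp := intervalIntegrable_dotProduct_deriv_self zero_le_one hwp hwp'
  have hm := intervalIntegrable_dotProduct_deriv_self zero_le_one hwm hwm'
  have hcontr₀ := D₀.dotProduct_mulVec_self_le hD₀ (wm 0)
  have hcontr₁ := D₁.dotProduct_mulVec_self_le hD₁ (wp 1)
  calc _ = ∫ x in (0:ℝ)..1, (wm' x ⬝ᵥ wm x - wp' x ⬝ᵥ wp x) := by
        refine intervalIntegral.integral_congr fun x _ => ?_
        simp only [sum_neg_mul_mul_one_div_abs_of_pos lp _ _ hlp,
          sum_neg_mul_mul_one_div_abs_of_neg lm _ _ hlm]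
        ring
    _ = (wm 1 ⬝ᵥ wm 1 - wm 0 ⬝ᵥ wm 0) / 2 - (wp 1 ⬝ᵥ wp 1 - wp 0 ⬝ᵥ wp 0) / 2 := by
        rw [intervalIntegral.integral_sub hm hp,
          integral_dotProduct_deriv_self zero_le_one hwm hwm',
          integral_dotProduct_deriv_self zero_le_one hwp hwp']
    _ ≤ 0 := by
        rw [hb0, hb1]
        linarith
end

section
/- Conversely, if the matrix inequality D₀ᵀD₀ ⪯ I_{N−k} fails or the matrix inequality D₁ᵀD₁ ⪯ I_k fails, then there exists an admissible w ∈ C¹([0,1]; ℝ^N) such that ∫₀¹ (−Λ w′(x))ᵀ Λ̃ w(x) dx > 0; hence the dissipativity inequality ∫₀¹ (−Λ w′)ᵀ Λ̃ w ≤ 0 holds for all admissible C¹ functions if and only if both D₀ᵀD₀ ⪯ I_{N−k} and D₁ᵀD₁ ⪯ I_k. -/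
open MeasureTheory

/-- `(wp, wm)` (with derivatives `(wp', wm')`) is an admissible C¹ function on `[0,1]`:
it is continuously differentiable and satisfies the boundary conditions
`w⁺(0) = D₀ w⁻(0)` and `w⁻(1) = D₁ w⁺(1)`. -/
def IsAdmissible (k l : ℕ) (D₀ : Matrix (Fin k) (Fin l) ℝ) (D₁ : Matrix (Fin l) (Fin k) ℝ)
    (wp wp' : ℝ → Fin k → ℝ) (wm wm' : ℝ → Fin l → ℝ) : Prop :=
  (∀ i, ∀ x ∈ Set.Icc (0:ℝ) 1,
    HasDerivWithinAt (fun t => wp t i) (wp' x i) (Set.Icc 0 1) x) ∧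
  (∀ j, ∀ x ∈ Set.Icc (0:ℝ) 1,
    HasDerivWithinAt (fun t => wm t j) (wm' x j) (Set.Icc 0 1) x) ∧
  (∀ i, ContinuousOn (fun t => wp' t i) (Set.Icc 0 1)) ∧
  (∀ j, ContinuousOn (fun t => wm' t j) (Set.Icc 0 1)) ∧
  wp 0 = D₀.mulVec (wm 0) ∧ wm 1 = D₁.mulVec (wp 1)

/-- The quantity `⟨Sw, w⟩_H = ∫₀¹ (−Λw′)ᵀ Λ̃ w`, where the first `k` components of `w`
are `wp` (speeds `lp i > 0`) and the last `l` components are `wm` (speeds `lm j < 0`). -/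
noncomputable def transportForm (k l : ℕ) (lp : Fin k → ℝ) (lm : Fin l → ℝ)
    (wp wp' : ℝ → Fin k → ℝ) (wm wm' : ℝ → Fin l → ℝ) : ℝ :=
  ∫ x in (0:ℝ)..1,
    ((∑ i, (-(lp i * wp' x i)) * ((1 / |lp i|) * wp x i)) +
      ∑ j, (-(lm j * wm' x j)) * ((1 / |lm j|) * wm x j))

/-!
Integrating by parts, the weights `1/|λᵢ|` cancel the speeds up to sign, so for an admissible `w`
the form equals the boundary term `(|w⁺(0)|² - |w⁺(1)|² + |w⁻(1)|² - |w⁻(0)|²) / 2`. The boundary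
conditions turn it into `(|D₀ v|² - |v|² + |D₁ u|² - |u|²) / 2` with `v = w⁻(0)`, `u = w⁺(1)`,
and since affine interpolation realises every pair `(v, u)` by an admissible `w`, the form is
nonpositive on all admissible functions exactly when `D₀` and `D₁` are contractions.
-/

open Matrix Set

theorem integral_deriv_mul_self_eq {w w' : ℝ → ℝ} {a b : ℝ} (hab : a ≤ b)
    (hw : ∀ x ∈ Icc a b, HasDerivWithinAt w (w' x) (Icc a b) x)
    (hw' : IntervalIntegrable w' volume a b) :
    ∫ x in a..b, w' x * w x = (w b ^ 2 - w a ^ 2) / 2 := by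
  rw [← uIcc_of_le hab] at hw
  have hparts := intervalIntegral.integral_mul_deriv_eq_deriv_mul_of_hasDerivWithinAt hw hw hw' hw'
  simp only [mul_comm (w _) (w' _)] at hparts
  linarith

theorem intervalIntegrable_deriv_mul_self {w w' : ℝ → ℝ} {a b : ℝ} (hab : a ≤ b)
    (hw : ∀ x ∈ Icc a b, HasDerivWithinAt w (w' x) (Icc a b) x)
    (hw' : ContinuousOn w' (Icc a b)) :
    IntervalIntegrable (fun x => w' x * w x) volume a b :=
  (hw'.mul fun x hx => (hw x hx).continuousWithinAt).intervalIntegrable_of_Icc hab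

theorem intervalIntegrable_sum_deriv_mul_self {ι : Type*} [Fintype ι] {w w' : ℝ → ι → ℝ}
    {a b : ℝ} (hab : a ≤ b)
    (hw : ∀ i, ∀ x ∈ Icc a b, HasDerivWithinAt (fun t => w t i) (w' x i) (Icc a b) x)
    (hw' : ∀ i, ContinuousOn (fun t => w' t i) (Icc a b)) :
    IntervalIntegrable (fun x => ∑ i, w' x i * w x i) volume a b := by
  simpa only [Finset.sum_fn] using
    IntervalIntegrable.sum Finset.univ fun i _ =>
      intervalIntegrable_deriv_mul_self hab (hw i) (hw' i)

theorem integral_sum_deriv_mul_self_eq {ι : Type*} [Fintype ι] {w w' : ℝ → ι → ℝ} {a b : ℝ}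
    (hab : a ≤ b)
    (hw : ∀ i, ∀ x ∈ Icc a b, HasDerivWithinAt (fun t => w t i) (w' x i) (Icc a b) x)
    (hw' : ∀ i, ContinuousOn (fun t => w' t i) (Icc a b)) :
    ∫ x in a..b, ∑ i, w' x i * w x i = (w b ⬝ᵥ w b - w a ⬝ᵥ w a) / 2 := by
  rw [intervalIntegral.integral_finsetSum fun i _ =>
      intervalIntegrable_deriv_mul_self hab (hw i) (hw' i),
    Finset.sum_congr rfl fun i _ =>
      integral_deriv_mul_self_eq hab (hw i) ((hw' i).intervalIntegrable_of_Icc hab)]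
  simp only [dotProduct, ← Finset.sum_div, Finset.sum_sub_distrib, sq]

theorem dotProduct_one_sub_transpose_mul_mulVec {R m n : Type*} [CommRing R] [Fintype m]
    [Fintype n] [DecidableEq n] (D : Matrix m n R) (v : n → R) :
    v ⬝ᵥ ((1 - Dᵀ * D) *ᵥ v) = v ⬝ᵥ v - D *ᵥ v ⬝ᵥ D *ᵥ v := by
  rw [sub_mulVec, dotProduct_sub, one_mulVec, ← mulVec_mulVec, dotProduct_mulVec,
    vecMul_transpose]

theorem posSemidef_one_sub_transpose_mul_iff {m n : Type*} [Fintype m] [Fintype n]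
    [DecidableEq n] (D : Matrix m n ℝ) :
    (1 - Dᵀ * D).PosSemidef ↔ ∀ v, D *ᵥ v ⬝ᵥ D *ᵥ v ≤ v ⬝ᵥ v := by
  have hherm : (1 - Dᵀ * D).IsHermitian :=
    isHermitian_one.sub (by simpa using isHermitian_conjTranspose_mul_self D)
  simp only [posSemidef_iff_dotProduct_mulVec, hherm, star_trivial,
    dotProduct_one_sub_transpose_mul_mulVec, sub_nonneg, true_and]

theorem transportForm_eq {k l : ℕ} {lp : Fin k → ℝ} {lm : Fin l → ℝ}
    (hlp : ∀ i, 0 < lp i) (hlm : ∀ j, lm j < 0)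
    {D₀ : Matrix (Fin k) (Fin l) ℝ} {D₁ : Matrix (Fin l) (Fin k) ℝ}
    {wp wp' : ℝ → Fin k → ℝ} {wm wm' : ℝ → Fin l → ℝ}
    (hadm : IsAdmissible k l D₀ D₁ wp wp' wm wm') :
    transportForm k l lp lm wp wp' wm wm' =
      (D₀ *ᵥ wm 0 ⬝ᵥ D₀ *ᵥ wm 0 - wm 0 ⬝ᵥ wm 0 +
        (D₁ *ᵥ wp 1 ⬝ᵥ D₁ *ᵥ wp 1 - wp 1 ⬝ᵥ wp 1)) / 2 := by
  obtain ⟨hdp, hdm, hcp, hcm, hb0, hb1⟩ := hadm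
  have hintegrand : ∀ x,
      (∑ i, -(lp i * wp' x i) * (1 / |lp i| * wp x i)) +
        ∑ j, -(lm j * wm' x j) * (1 / |lm j| * wm x j) =
      (∑ j, wm' x j * wm x j) - ∑ i, wp' x i * wp x i := by
    intro x
    rw [sub_eq_neg_add, ← Finset.sum_neg_distrib]
    congr 1 <;> refine Finset.sum_congr rfl fun i _ => ?_
    · rw [abs_of_pos (hlp i)]
      field_simp [(hlp i).ne']
    · rw [abs_of_neg (hlm i)]
      field_simp [(hlm i).ne]
  unfold transportForm
  simp only [hintegrand]
  rw [intervalIntegral.integral_sub (intervalIntegrable_sum_deriv_mul_self zero_le_one hdm hcm)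
      (intervalIntegrable_sum_deriv_mul_self zero_le_one hdp hcp),
    integral_sum_deriv_mul_self_eq zero_le_one hdm hcm,
    integral_sum_deriv_mul_self_eq zero_le_one hdp hcp, hb0, hb1]
  ring

theorem exists_isAdmissible_eq {k l : ℕ} (D₀ : Matrix (Fin k) (Fin l) ℝ)
    (D₁ : Matrix (Fin l) (Fin k) ℝ) (v : Fin l → ℝ) (u : Fin k → ℝ) :
    ∃ wp wp' wm wm', IsAdmissible k l D₀ D₁ wp wp' wm wm' ∧ wm 0 = v ∧ wp 1 = u := by
  refine ⟨fun t i => AffineMap.lineMap ((D₀ *ᵥ v) i) (u i) t, fun _ => u - D₀ *ᵥ v,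
    fun t j => AffineMap.lineMap (v j) ((D₁ *ᵥ u) j) t, fun _ => D₁ *ᵥ u - v,
    ⟨fun _ _ _ => AffineMap.hasDerivWithinAt_lineMap,
      fun _ _ _ => AffineMap.hasDerivWithinAt_lineMap,
      fun _ => continuousOn_const, fun _ => continuousOn_const, ?_, ?_⟩, ?_, ?_⟩ <;>
  simp

/-- If `D₀ᵀD₀ ⪯ I` fails or `D₁ᵀD₁ ⪯ I` fails, then some admissible C¹ function makes
`⟨Sw, w⟩_H > 0`; hence dissipativity on all admissible C¹ functions holds if and only if
both matrix inequalities hold. -/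
theorem statement7 (k l : ℕ) (lp : Fin k → ℝ) (lm : Fin l → ℝ)
    (hlp : ∀ i, 0 < lp i) (hlm : ∀ j, lm j < 0)
    (D₀ : Matrix (Fin k) (Fin l) ℝ) (D₁ : Matrix (Fin l) (Fin k) ℝ) :
    ((¬ ((1 : Matrix (Fin l) (Fin l) ℝ) - D₀.transpose * D₀).PosSemidef ∨
      ¬ ((1 : Matrix (Fin k) (Fin k) ℝ) - D₁.transpose * D₁).PosSemidef) →
      ∃ wp wp' wm wm', IsAdmissible k l D₀ D₁ wp wp' wm wm' ∧
        0 < transportForm k l lp lm wp wp' wm wm') ∧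
    ((∀ wp wp' wm wm', IsAdmissible k l D₀ D₁ wp wp' wm wm' →
        transportForm k l lp lm wp wp' wm wm' ≤ 0) ↔
      (((1 : Matrix (Fin l) (Fin l) ℝ) - D₀.transpose * D₀).PosSemidef ∧
        ((1 : Matrix (Fin k) (Fin k) ℝ) - D₁.transpose * D₁).PosSemidef)) := by
  have hdiss : (∀ wp wp' wm wm', IsAdmissible k l D₀ D₁ wp wp' wm wm' →
      transportForm k l lp lm wp wp' wm wm' ≤ 0) ↔
      ∀ v u, D₀ *ᵥ v ⬝ᵥ D₀ *ᵥ v - v ⬝ᵥ v + (D₁ *ᵥ u ⬝ᵥ D₁ *ᵥ u - u ⬝ᵥ u) ≤ 0 := by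
    constructor
    · intro h v u
      obtain ⟨wp, wp', wm, wm', hadm, rfl, rfl⟩ := exists_isAdmissible_eq D₀ D₁ v u
      have hform := h _ _ _ _ hadm
      rw [transportForm_eq hlp hlm hadm] at hform
      linarith
    · intro h wp wp' wm wm' hadm
      rw [transportForm_eq hlp hlm hadm]
      linarith [h (wm 0) (wp 1)]
  have hpsd : ((1 : Matrix (Fin l) (Fin l) ℝ) - D₀.transpose * D₀).PosSemidef ∧
      ((1 : Matrix (Fin k) (Fin k) ℝ) - D₁.transpose * D₁).PosSemidef ↔
      ∀ v u, D₀ *ᵥ v ⬝ᵥ D₀ *ᵥ v - v ⬝ᵥ v + (D₁ *ᵥ u ⬝ᵥ D₁ *ᵥ u - u ⬝ᵥ u) ≤ 0 := by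
    simp only [posSemidef_one_sub_transpose_mul_iff]
    refine ⟨fun ⟨h₀, h₁⟩ v u => by linarith [h₀ v, h₁ u], fun h => ⟨fun v => ?_, fun u => ?_⟩⟩
    · simpa using h v 0
    · simpa using h 0 u
  refine ⟨fun hfail => ?_, hdiss.trans hpsd.symm⟩
  by_contra hnone
  push Not at hnone
  exact not_and_or.2 hfail (hpsd.2 (hdiss.1 hnone))
end

section
/- Let H be a real Hilbert space, n ∈ ℕ, P ∈ ℝ^{n×n} symmetric, p_min > 0 a constant such that zᵀPz ≥ p_min|z|² for all z ∈ ℝⁿ, and M : ℝⁿ → H a bounded linear operator with operator norm ‖M‖. Define V(z,w) = zᵀPz + ‖w − Mz‖²_H. Then for all (z,w) ∈ ℝⁿ × H, V(z,w) ≥ min(p_min/2, p_min/(p_min + 2‖M‖²)) · (|z|² + ‖w‖²_H). Consequently, together with the corresponding upper bound, the norm induced by V is equivalent to the product norm on ℝⁿ × H. -/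
/-!
With `p = p_min`: since `‖w‖ ≤ ‖w - Mz‖ + ‖M‖‖z‖`, the weighted Cauchy–Schwarz inequality
`(s + m a)² ≤ (1 + 2m²/p)(s² + (p/2) a²)` gives
`‖w‖² ≤ (p + 2‖M‖²)/p · (‖w - Mz‖² + (p/2)‖z‖²)`. Splitting `p‖z‖²` into two halves, one half
controls `‖z‖²` and the other, together with `‖w - Mz‖²`, controls `‖w‖²`.
The upper bound is the triangle inequality and the operator norms of `P` and `M`.
-/

lemma add_mul_sq_le_mul_sq_add_mul_sq (s m a : ℝ) {q : ℝ} (hq : 0 < q) :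
    (s + m * a) ^ 2 ≤ (1 + m ^ 2 / q) * (s ^ 2 + q * a ^ 2) := by
  have hgap : (1 + m ^ 2 / q) * (s ^ 2 + q * a ^ 2) - (s + m * a) ^ 2 = (m * s - q * a) ^ 2 / q := by
    field_simp
    ring
  nlinarith [div_nonneg (sq_nonneg (m * s - q * a)) hq.le]

lemma min_mul_sq_add_sq_le {p m a b s : ℝ} (hp : 0 < p) (hb : 0 ≤ b) (hbs : b ≤ s + m * a) :
    min (p / 2) (p / (p + 2 * m ^ 2)) * (a ^ 2 + b ^ 2) ≤ p * a ^ 2 + s ^ 2 := by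
  set c := min (p / 2) (p / (p + 2 * m ^ 2))
  have hD : 0 < p + 2 * m ^ 2 := by positivity
  have hc : 0 ≤ c := le_min (by positivity) (by positivity)
  have hb2 : b ^ 2 ≤ (p + 2 * m ^ 2) / p * (s ^ 2 + p / 2 * a ^ 2) := calc
    b ^ 2 ≤ (s + m * a) ^ 2 := pow_le_pow_left₀ hb hbs 2
    _ ≤ (1 + m ^ 2 / (p / 2)) * (s ^ 2 + p / 2 * a ^ 2) :=
      add_mul_sq_le_mul_sq_add_mul_sq s m a (half_pos hp)
    _ = (p + 2 * m ^ 2) / p * (s ^ 2 + p / 2 * a ^ 2) := by field_simp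
  calc c * (a ^ 2 + b ^ 2) = c * a ^ 2 + c * b ^ 2 := by ring
    _ ≤ p / 2 * a ^ 2 + p / (p + 2 * m ^ 2) * ((p + 2 * m ^ 2) / p * (s ^ 2 + p / 2 * a ^ 2)) := by
      gcongr
      · exact min_le_left _ _
      · exact min_le_right _ _
    _ = p * a ^ 2 + s ^ 2 := by field_simp; ring

section ContinuousLinearMap

variable {E F : Type*} [SeminormedAddCommGroup E] [NormedSpace ℝ E]
  [SeminormedAddCommGroup F] [NormedSpace ℝ F] (M : E →L[ℝ] F)

theorem ContinuousLinearMap.min_mul_norm_sq_add_norm_sq_le {p : ℝ} (hp : 0 < p) (z : E) (w : F) :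
    min (p / 2) (p / (p + 2 * ‖M‖ ^ 2)) * (‖z‖ ^ 2 + ‖w‖ ^ 2) ≤ p * ‖z‖ ^ 2 + ‖w - M z‖ ^ 2 := by
  refine min_mul_sq_add_sq_le hp (norm_nonneg w) ?_
  calc ‖w‖ ≤ ‖w - M z‖ + ‖M z‖ := norm_le_norm_sub_add w (M z)
    _ ≤ ‖w - M z‖ + ‖M‖ * ‖z‖ := by grw [M.le_opNorm z]

theorem ContinuousLinearMap.norm_sub_apply_sq_le (z : E) (w : F) :
    ‖w - M z‖ ^ 2 ≤ 2 * ‖w‖ ^ 2 + 2 * ‖M‖ ^ 2 * ‖z‖ ^ 2 := calc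
  ‖w - M z‖ ^ 2 ≤ (‖w‖ + ‖M‖ * ‖z‖) ^ 2 := by
    gcongr
    grw [norm_sub_le, M.le_opNorm z]
  _ ≤ 2 * (‖w‖ ^ 2 + (‖M‖ * ‖z‖) ^ 2) := add_sq_le
  _ = 2 * ‖w‖ ^ 2 + 2 * ‖M‖ ^ 2 * ‖z‖ ^ 2 := by ring

end ContinuousLinearMap

theorem Matrix.dotProduct_mulVec_le_norm_toEuclideanCLM_mul_sq {n : Type*} [Fintype n]
    [DecidableEq n] (P : Matrix n n ℝ) (z : EuclideanSpace ℝ n) :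
    dotProduct z (P.mulVec z) ≤ ‖Matrix.toEuclideanCLM (𝕜 := ℝ) P‖ * ‖z‖ ^ 2 := by
  set T := Matrix.toEuclideanCLM (𝕜 := ℝ) P
  have hinner : dotProduct z (P.mulVec z) = inner ℝ z (T z) := by
    rw [EuclideanSpace.inner_eq_star_dotProduct, dotProduct_comm]
    simp [T]
  calc dotProduct z (P.mulVec z) = inner ℝ z (T z) := hinner
    _ ≤ ‖z‖ * ‖T z‖ := real_inner_le_norm _ _
    _ ≤ ‖z‖ * (‖T‖ * ‖z‖) := by grw [T.le_opNorm z]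
    _ = ‖T‖ * ‖z‖ ^ 2 := by ring

theorem statement10_general {H : Type*} [NormedAddCommGroup H] [InnerProductSpace ℝ H]
    (n : ℕ) (P : Matrix (Fin n) (Fin n) ℝ)
    (pmin : ℝ) (hpmin : 0 < pmin)
    (hPbound : ∀ z : EuclideanSpace ℝ (Fin n),
      pmin * ‖z‖ ^ 2 ≤ dotProduct z (P.mulVec z))
    (M : EuclideanSpace ℝ (Fin n) →L[ℝ] H) :
    (∀ (z : EuclideanSpace ℝ (Fin n)) (w : H),
      min (pmin / 2) (pmin / (pmin + 2 * ‖M‖ ^ 2)) * (‖z‖ ^ 2 + ‖w‖ ^ 2)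
        ≤ dotProduct z (P.mulVec z) + ‖w - M z‖ ^ 2) ∧
    (∃ c₁ c₂ : ℝ, 0 < c₁ ∧ 0 < c₂ ∧
      ∀ (z : EuclideanSpace ℝ (Fin n)) (w : H),
        c₁ * (‖z‖ ^ 2 + ‖w‖ ^ 2)
            ≤ dotProduct z (P.mulVec z) + ‖w - M z‖ ^ 2 ∧
        dotProduct z (P.mulVec z) + ‖w - M z‖ ^ 2
            ≤ c₂ * (‖z‖ ^ 2 + ‖w‖ ^ 2)) := by
  have lower : ∀ (z : EuclideanSpace ℝ (Fin n)) (w : H),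
      min (pmin / 2) (pmin / (pmin + 2 * ‖M‖ ^ 2)) * (‖z‖ ^ 2 + ‖w‖ ^ 2)
        ≤ dotProduct z (P.mulVec z) + ‖w - M z‖ ^ 2 := fun z w =>
    (M.min_mul_norm_sq_add_norm_sq_le hpmin z w).trans (by grw [hPbound z])
  set T := Matrix.toEuclideanCLM (𝕜 := ℝ) P
  refine ⟨lower, _, ‖T‖ + 2 * ‖M‖ ^ 2 + 2, lt_min (by positivity) (by positivity),
    by positivity, fun z w => ⟨lower z w, ?_⟩⟩
  have hP := P.dotProduct_mulVec_le_norm_toEuclideanCLM_mul_sq z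
  have hM := M.norm_sub_apply_sq_le z w
  nlinarith [mul_nonneg (norm_nonneg T) (sq_nonneg ‖w‖), mul_nonneg (sq_nonneg ‖M‖) (sq_nonneg ‖w‖),
    sq_nonneg ‖z‖]

/-- Lower bound for the forwarding Lyapunov function `V(z,w) = zᵀPz + ‖w − Mz‖²`:
`V(z,w) ≥ min(p_min/2, p_min/(p_min + 2‖M‖²))·(|z|² + ‖w‖²)`; consequently (together
with the corresponding upper bound) the norm induced by `V` is equivalent to the
product norm on `ℝⁿ × H`. -/
theorem statement10 {H : Type*} [NormedAddCommGroup H] [InnerProductSpace ℝ H]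
    (n : ℕ) (P : Matrix (Fin n) (Fin n) ℝ) (hP : P.IsSymm)
    (pmin : ℝ) (hpmin : 0 < pmin)
    (hPbound : ∀ z : EuclideanSpace ℝ (Fin n),
      pmin * ‖z‖ ^ 2 ≤ dotProduct z (P.mulVec z))
    (M : EuclideanSpace ℝ (Fin n) →L[ℝ] H) :
    (∀ (z : EuclideanSpace ℝ (Fin n)) (w : H),
      min (pmin / 2) (pmin / (pmin + 2 * ‖M‖ ^ 2)) * (‖z‖ ^ 2 + ‖w‖ ^ 2)
        ≤ dotProduct z (P.mulVec z) + ‖w - M z‖ ^ 2) ∧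
    (∃ c₁ c₂ : ℝ, 0 < c₁ ∧ 0 < c₂ ∧
      ∀ (z : EuclideanSpace ℝ (Fin n)) (w : H),
        c₁ * (‖z‖ ^ 2 + ‖w‖ ^ 2)
            ≤ dotProduct z (P.mulVec z) + ‖w - M z‖ ^ 2 ∧
        dotProduct z (P.mulVec z) + ‖w - M z‖ ^ 2
            ≤ c₂ * (‖z‖ ^ 2 + ‖w‖ ^ 2)) :=
  statement10_general n P pmin hpmin hPbound M
end

section
/- In the forwarding setting, for every (z,w) ∈ ℝⁿ × H, setting u = −Bᵀ(Pz − M*(w − Mz)), the formal derivative of V along the closed loop satisfies: 2 zᵀ P (Az + Bσ(u)) + 2 ⟨Sw + Γ(Cz) − M(Az + Bσ(u)), w − Mz⟩_H ≤ −|z|² − 2 σ(u)ᵀu ≤ 0. -/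
open scoped RealInnerProductSpace
open ContinuousLinearMap

/-- Forwarding setting: along the closed loop with feedback
`u = −Bᵀ(Pz − M*(w − Mz))`, the formal derivative of the Lyapunov function
`V(z,w) = zᵀPz + ‖w − Mz‖²` satisfies
`2 zᵀP(Az + Bσ(u)) + 2⟨Sw + Γ(Cz) − M(Az + Bσ(u)), w − Mz⟩ ≤ −|z|² − 2σ(u)ᵀu ≤ 0`. -/
theorem statement11 {H : Type*} [NormedAddCommGroup H] [InnerProductSpace ℝ H]
    [CompleteSpace H] (n m p : ℕ)
    -- S is a bounded dissipative operator on H: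
    (S : H →L[ℝ] H) (hS : ∀ h : H, ⟪S h, h⟫ ≤ 0)
    (A : EuclideanSpace ℝ (Fin n) →L[ℝ] EuclideanSpace ℝ (Fin n))
    (B : EuclideanSpace ℝ (Fin m) →L[ℝ] EuclideanSpace ℝ (Fin n))
    (C : EuclideanSpace ℝ (Fin n) →L[ℝ] EuclideanSpace ℝ (Fin p))
    -- P is symmetric positive definite and solves the Lyapunov equation PA + AᵀP = −I:
    (P : EuclideanSpace ℝ (Fin n) →L[ℝ] EuclideanSpace ℝ (Fin n))
    (hPsym : IsSelfAdjoint P)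
    (hPpos : ∀ z : EuclideanSpace ℝ (Fin n), z ≠ 0 → 0 < ⟪P z, z⟫)
    (hLyap : P ∘L A + adjoint A ∘L P = -ContinuousLinearMap.id ℝ (EuclideanSpace ℝ (Fin n)))
    (Γ : EuclideanSpace ℝ (Fin p) →L[ℝ] H)
    -- M solves the Sylvester equation S M − M A = −Γ C:
    (M : EuclideanSpace ℝ (Fin n) →L[ℝ] H)
    (hSyl : ∀ z : EuclideanSpace ℝ (Fin n), S (M z) - M (A z) = -(Γ (C z)))
    -- σ is a cone-bounded nonlinearity:
    (σ : EuclideanSpace ℝ (Fin m) → EuclideanSpace ℝ (Fin m)) (L : ℝ)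
    (hσcont : Continuous σ) (hσzero : ∀ s, σ s = 0 ↔ s = 0)
    (hσmono : ∀ s₁ s₂, 0 ≤ ⟪σ s₁ - σ s₂, s₁ - s₂⟫)
    (hL : 0 < L) (hσlin : ∀ s, ‖σ s‖ ≤ L * ‖s‖) :
    ∀ (z : EuclideanSpace ℝ (Fin n)) (w : H) (u : EuclideanSpace ℝ (Fin m)),
      u = -(adjoint B) (P z - adjoint M (w - M z)) →
      (2 * ⟪z, P (A z + B (σ u))⟫
          + 2 * ⟪S w + Γ (C z) - M (A z + B (σ u)), w - M z⟫
        ≤ -‖z‖ ^ 2 - 2 * ⟪σ u, u⟫) ∧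
      -‖z‖ ^ 2 - 2 * ⟪σ u, u⟫ ≤ 0 := by
  intro z w u hu
  have hσ0 : σ 0 = 0 := (hσzero 0).mpr rfl
  have hmon : 0 ≤ ⟪σ u, u⟫ := by simpa [hσ0] using hσmono u 0
  set v := σ u with hv
  set e := w - M z with he
  -- 2⟪z, P (A z)⟫ = -‖z‖²
  have hlyap : ⟪z, P (A z)⟫ + ⟪z, (adjoint A) (P z)⟫ = -‖z‖ ^ 2 := by
    have h := congrArg (fun T => ⟪z, T z⟫) hLyap
    simp only [ContinuousLinearMap.add_apply, ContinuousLinearMap.coe_comp',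
      Function.comp_apply, ContinuousLinearMap.neg_apply, ContinuousLinearMap.id_apply,
      inner_add_right, inner_neg_right, real_inner_self_eq_norm_sq] at h
    linarith [h]
  have hsym : ∀ x y, ⟪P x, y⟫ = ⟪x, P y⟫ := fun x y => hPsym.isSymmetric x y
  have hadjA : ⟪z, (adjoint A) (P z)⟫ = ⟪z, P (A z)⟫ := by
    rw [ContinuousLinearMap.adjoint_inner_right, real_inner_comm]
    exact hsym z (A z)
  have hPA : 2 * ⟪z, P (A z)⟫ = -‖z‖ ^ 2 := by linarith
  -- cross term with P
  have hPB : ⟪z, P (B v)⟫ = ⟪v, (adjoint B) (P z)⟫ := by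
    rw [ContinuousLinearMap.adjoint_inner_right, ← hsym z (B v)]
    exact real_inner_comm _ _
  -- Sylvester rearranged
  have hM : S w + Γ (C z) - M (A z + B v) = S e - M (B v) := by
    have h := hSyl z
    have h2 : M (A z) - S (M z) = Γ (C z) := by rw [← neg_sub, h, neg_neg]
    have hMA : M (A z) = S (M z) + Γ (C z) := by
      exact (eq_add_of_sub_eq h2).trans (add_comm _ _)
    simp only [he, map_add, hMA, map_sub]
    abel
  have hMB : ⟪M (B v), e⟫ = ⟪v, (adjoint B) ((adjoint M) e)⟫ := by
    rw [ContinuousLinearMap.adjoint_inner_right, ContinuousLinearMap.adjoint_inner_right]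
  have hu2 : ⟪v, u⟫ = -⟪v, (adjoint B) (P z)⟫ + ⟪v, (adjoint B) ((adjoint M) e)⟫ := by
    rw [hu]
    simp [inner_sub_right, inner_neg_right, map_sub]
    ring
  constructor
  · have hSe := hS e
    have expand1 : ⟪z, P (A z + B v)⟫ = ⟪z, P (A z)⟫ + ⟪z, P (B v)⟫ := by
      rw [map_add, inner_add_right]
    have expand2 : ⟪S w + Γ (C z) - M (A z + B v), e⟫ = ⟪S e, e⟫ - ⟪M (B v), e⟫ := by
      rw [hM, inner_sub_left]
    rw [expand1, expand2, hPB, hMB]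
    linarith [hSe, hPA, hu2]
  · nlinarith [sq_nonneg ‖z‖, hmon]
end

section
/- In the forwarding setting, define the closed-loop vector field 𝒜(z,w) = (Az + Bσ(u(z,w)), Sw + Γ(Cz)) with u(z,w) = −Bᵀ(Pz − M*(w − Mz)), and the inner product ⟨(z₁,w₁),(z₂,w₂)⟩_V = z₁ᵀPz₂ + ⟨w₁ − Mz₁, w₂ − Mz₂⟩_H on ℝⁿ × H. Then 𝒜 is dissipative with respect to ⟨·,·⟩_V: for all ζ₁ = (z₁,w₁) and ζ₂ = (z₂,w₂) in ℝⁿ × H, ⟨𝒜(ζ₁) − 𝒜(ζ₂), ζ₁ − ζ₂⟩_V ≤ −½|z₁ − z₂|² ≤ 0. -/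
open scoped RealInnerProductSpace
open ContinuousLinearMap

/-- Forwarding setting: the closed-loop vector field
`𝒜(z,w) = (Az + Bσ(u(z,w)), Sw + Γ(Cz))`, `u(z,w) = −Bᵀ(Pz − M*(w − Mz))`,
is dissipative for the inner product
`⟨(z₁,w₁),(z₂,w₂)⟩_V = z₁ᵀPz₂ + ⟨w₁ − Mz₁, w₂ − Mz₂⟩`:
`⟨𝒜(ζ₁) − 𝒜(ζ₂), ζ₁ − ζ₂⟩_V ≤ −½|z₁ − z₂|² ≤ 0`. -/
theorem statement12 {H : Type*} [NormedAddCommGroup H] [InnerProductSpace ℝ H]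
    [CompleteSpace H] (n m p : ℕ)
    (S : H →L[ℝ] H) (hS : ∀ h : H, ⟪S h, h⟫ ≤ 0)
    (A : EuclideanSpace ℝ (Fin n) →L[ℝ] EuclideanSpace ℝ (Fin n))
    (B : EuclideanSpace ℝ (Fin m) →L[ℝ] EuclideanSpace ℝ (Fin n))
    (C : EuclideanSpace ℝ (Fin n) →L[ℝ] EuclideanSpace ℝ (Fin p))
    (P : EuclideanSpace ℝ (Fin n) →L[ℝ] EuclideanSpace ℝ (Fin n))
    (hPsym : IsSelfAdjoint P)
    (hPpos : ∀ z : EuclideanSpace ℝ (Fin n), z ≠ 0 → 0 < ⟪P z, z⟫)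
    (hLyap : P ∘L A + adjoint A ∘L P = -ContinuousLinearMap.id ℝ (EuclideanSpace ℝ (Fin n)))
    (Γ : EuclideanSpace ℝ (Fin p) →L[ℝ] H)
    (M : EuclideanSpace ℝ (Fin n) →L[ℝ] H)
    (hSyl : ∀ z : EuclideanSpace ℝ (Fin n), S (M z) - M (A z) = -(Γ (C z)))
    (σ : EuclideanSpace ℝ (Fin m) → EuclideanSpace ℝ (Fin m)) (L : ℝ)
    (hσcont : Continuous σ) (hσzero : ∀ s, σ s = 0 ↔ s = 0)
    (hσmono : ∀ s₁ s₂, 0 ≤ ⟪σ s₁ - σ s₂, s₁ - s₂⟫)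
    (hL : 0 < L) (hσlin : ∀ s, ‖σ s‖ ≤ L * ‖s‖) :
    ∀ (z₁ z₂ : EuclideanSpace ℝ (Fin n)) (w₁ w₂ : H)
      (u₁ u₂ : EuclideanSpace ℝ (Fin m)),
      u₁ = -(adjoint B) (P z₁ - adjoint M (w₁ - M z₁)) →
      u₂ = -(adjoint B) (P z₂ - adjoint M (w₂ - M z₂)) →
      (⟪(A z₁ + B (σ u₁)) - (A z₂ + B (σ u₂)), P (z₁ - z₂)⟫
          + ⟪((S w₁ + Γ (C z₁)) - (S w₂ + Γ (C z₂)))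
              - M ((A z₁ + B (σ u₁)) - (A z₂ + B (σ u₂))),
            (w₁ - w₂) - M (z₁ - z₂)⟫
        ≤ -(1/2) * ‖z₁ - z₂‖ ^ 2) ∧
      -(1/2) * ‖z₁ - z₂‖ ^ 2 ≤ 0 := by

  intro z₁ z₂ w₁ w₂ u₁ u₂ hu₁ hu₂
  constructor
  case right => nlinarith [sq_nonneg ‖z₁ - z₂‖]
  have e1 : (A z₁ + B (σ u₁)) - (A z₂ + B (σ u₂)) = A (z₁ - z₂) + B (σ u₁ - σ u₂) := by
    simp only [map_sub, map_add]; abel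
  have e2 : ((S w₁ + Γ (C z₁)) - (S w₂ + Γ (C z₂))) = S (w₁ - w₂) + Γ (C (z₁ - z₂)) := by
    simp only [map_sub, map_add]; abel
  rw [e1, e2]
  set z := z₁ - z₂ with hz
  set w := w₁ - w₂ with hw
  set v := σ u₁ - σ u₂ with hv
  set η := w - M z with hη
  have hΓ : Γ (C z) = M (A z) - S (M z) := by
    have h := hSyl z
    apply neg_injective
    rw [← h]; abel
  have e3 : (S w + Γ (C z)) - M (A z + B v) = S η - M (B v) := by
    rw [hΓ, hη]
    simp only [map_add, map_sub]
    abel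
  rw [e3]
  have hPadj : adjoint P = P := hPsym.adjoint_eq
  have hA : ⟪A z, P z⟫ = -(1/2) * ‖z‖ ^ 2 := by
    have h := congrArg (fun T => ⟪T z, z⟫) hLyap
    simp only [ContinuousLinearMap.add_apply, ContinuousLinearMap.comp_apply,
      ContinuousLinearMap.neg_apply, ContinuousLinearMap.id_apply, inner_add_left,
      inner_neg_left, real_inner_self_eq_norm_sq] at h
    have h1 : ⟪P (A z), z⟫ = ⟪A z, P z⟫ := by
      calc ⟪P (A z), z⟫ = ⟪adjoint P (A z), z⟫ := by rw [hPadj]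
        _ = ⟪A z, P z⟫ := ContinuousLinearMap.adjoint_inner_left P z (A z)
    have h2 : ⟪(adjoint A) (P z), z⟫ = ⟪A z, P z⟫ := by
      rw [ContinuousLinearMap.adjoint_inner_left, real_inner_comm]
    linarith
  have hu : u₁ - u₂ = -((adjoint B) (P z - (adjoint M) η)) := by
    rw [hu₁, hu₂]
    simp only [hη, hw, hz, map_sub, map_neg]
    abel
  have c1 : ⟪B v, P z⟫ = ⟪v, adjoint B (P z)⟫ :=
    (ContinuousLinearMap.adjoint_inner_right B v (P z)).symm
  have c2 : ⟪M (B v), η⟫ = ⟪v, adjoint B (adjoint M η)⟫ :=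
    ((ContinuousLinearMap.adjoint_inner_right B v ((adjoint M) η)).trans
      (ContinuousLinearMap.adjoint_inner_right M (B v) η)).symm
  have hu2 : (adjoint B) (P z - (adjoint M) η) = -(u₁ - u₂) := by rw [hu, neg_neg]
  have hcross : ⟪B v, P z⟫ - ⟪M (B v), η⟫ = -⟪v, u₁ - u₂⟫ := by
    rw [c1, c2, ← inner_sub_right, ← map_sub (adjoint B), hu2, inner_neg_right]
  have hmono := hσmono u₁ u₂
  have hSη := hS η
  rw [inner_add_left, inner_sub_left]
  rw [← hv] at hmono
  linarith
end

section
/- In the forwarding setting, let (z, w) : [0,∞) → ℝⁿ × H be continuously differentiable and satisfy the closed-loop equations z′(t) = Az(t) + Bσ(u(t)) and w′(t) = Sw(t) + Γ(Cz(t)) with u(t) = −Bᵀ(Pz(t) − M*(w(t) − Mz(t))). Then for every T ≥ 0: V(z(T), w(T)) + ∫₀ᵀ |z(s)|² ds + 2∫₀ᵀ σ(u(s))ᵀu(s) ds ≤ V(z(0), w(0)). In particular, t ↦ V(z(t), w(t)) is nonincreasing. -/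
open scoped RealInnerProductSpace
open ContinuousLinearMap MeasureTheory Set

/-!
Along a trajectory the error `e = w - M z` satisfies `e' = S e - M B σ(u)` by the Sylvester
equation, so the coupling `Γ C z` drops out. Differentiating `V`, the Lyapunov equation turns the
`z`-part into `-|z|²`, and the feedback `u = -Bᵀ(P z - M* e)` is chosen exactly so that the two
cross terms in `B σ(u)` combine to `-2 σ(u)ᵀu`. Hence
`V' = -|z|² - 2 σ(u)ᵀu + 2 ⟪S e, e⟫ ≤ -|z|² - 2 σ(u)ᵀu ≤ 0`, by dissipativity of `S` and
because `σ(u)ᵀu ≥ 0` for a monotone `σ` with `σ 0 = 0`; integrate.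
-/

theorem sub_le_integral_of_hasDerivWithinAt_Ici {f f' φ : ℝ → ℝ} {a b : ℝ} (hab : a ≤ b)
    (hf : ∀ x ∈ Ici a, HasDerivWithinAt f (f' x) (Ici a) x)
    (hφ : IntegrableOn φ (Icc a b)) (hle : ∀ x ∈ Ioo a b, f' x ≤ φ x) :
    f b - f a ≤ ∫ x in a..b, φ x :=
  intervalIntegral.sub_le_integral_of_hasDeriv_right_of_le hab
    (fun x hx => (hf x hx.1).continuousWithinAt.mono Icc_subset_Ici_self)
    (fun x hx => (hf x hx.1.le).mono (Ioi_subset_Ici hx.1.le)) hφ hle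

theorem antitoneOn_Ici_of_hasDerivWithinAt_nonpos {f f' : ℝ → ℝ} {a : ℝ}
    (hf : ∀ x ∈ Ici a, HasDerivWithinAt f (f' x) (Ici a) x) (hf' : ∀ x ∈ Ioi a, f' x ≤ 0) :
    AntitoneOn f (Ici a) := by
  refine antitoneOn_of_hasDerivWithinAt_nonpos (convex_Ici a)
    (fun x hx => (hf x hx).continuousWithinAt) (fun x hx => ?_) (by rwa [interior_Ici])
  rw [interior_Ici] at hx ⊢
  exact (hf x (mem_Ici.2 (le_of_lt hx))).mono Ioi_subset_Ici_self

theorem inner_apply_self_nonneg_of_monotone {U : Type*} [NormedAddCommGroup U]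
    [InnerProductSpace ℝ U] {σ : U → U} (hmono : ∀ s₁ s₂, 0 ≤ ⟪σ s₁ - σ s₂, s₁ - s₂⟫)
    (hσ0 : σ 0 = 0) (s : U) : 0 ≤ ⟪σ s, s⟫ := by
  simpa [hσ0] using hmono s 0

theorem hasDerivWithinAt_sub_of_sylvester {E Y H : Type*}
    [NormedAddCommGroup E] [NormedSpace ℝ E] [NormedAddCommGroup Y] [NormedSpace ℝ Y]
    [NormedAddCommGroup H] [NormedSpace ℝ H] {S : H →L[ℝ] H} {A : E →L[ℝ] E} {C : E →L[ℝ] Y}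
    {Γ : Y →L[ℝ] H} {M : E →L[ℝ] H} (hSyl : ∀ x, S (M x) - M (A x) = -(Γ (C x)))
    {z : ℝ → E} {w : ℝ → H} {b : E} {s : Set ℝ} {t : ℝ}
    (hz : HasDerivWithinAt z (A (z t) + b) s t)
    (hw : HasDerivWithinAt w (S (w t) + Γ (C (z t))) s t) :
    HasDerivWithinAt (fun τ => w τ - M (z τ)) (S (w t - M (z t)) - M b) s t := by
  refine (hw.sub (M.hasFDerivAt.comp_hasDerivWithinAt t hz)).congr_deriv ?_
  rw [map_sub, map_add, sub_eq_iff_eq_add.mp (hSyl (z t))]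
  abel

section Forwarding

variable {E U Y H : Type*}
  [NormedAddCommGroup E] [InnerProductSpace ℝ E] [CompleteSpace E]
  [NormedAddCommGroup U] [InnerProductSpace ℝ U] [CompleteSpace U]
  [NormedAddCommGroup Y] [NormedSpace ℝ Y]
  [NormedAddCommGroup H] [InnerProductSpace ℝ H] [CompleteSpace H]

theorem inner_lyapunov_eq_neg_norm_sq {P A : E →L[ℝ] E}
    (hLyap : P ∘L A + adjoint A ∘L P = -ContinuousLinearMap.id ℝ E) (x : E) :
    ⟪x, P (A x)⟫ + ⟪A x, P x⟫ = -‖x‖ ^ 2 := by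
  have h := congrArg (fun T => ⟪x, T x⟫) hLyap
  simpa [inner_add_right, adjoint_inner_right, real_inner_self_eq_norm_sq] using h

theorem lyapunov_derivative_identity {P A : E →L[ℝ] E} {B : U →L[ℝ] E} {S : H →L[ℝ] H}
    {M : E →L[ℝ] H} (hP : IsSelfAdjoint P)
    (hLyap : P ∘L A + adjoint A ∘L P = -ContinuousLinearMap.id ℝ E) (x : E) (e : H) (v : U) :
    ⟪x, P (A x + B v)⟫ + ⟪A x + B v, P x⟫ + 2 * ⟪e, S e - M (B v)⟫
      = -‖x‖ ^ 2 - 2 * ⟪v, -(adjoint B) (P x - adjoint M e)⟫ + 2 * ⟪S e, e⟫ := by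
  have hPB : ⟪x, P (B v)⟫ = ⟪B v, P x⟫ := by
    rw [real_inner_comm, hP.isSymmetric.apply_clm]
  have hB : ⟪B v, P x⟫ = ⟪v, adjoint B (P x)⟫ := (adjoint_inner_right B v (P x)).symm
  have hMB : ⟪e, M (B v)⟫ = ⟪v, adjoint B (adjoint M e)⟫ := by
    rw [adjoint_inner_right, adjoint_inner_right, real_inner_comm]
  have hA := inner_lyapunov_eq_neg_norm_sq hLyap x
  simp only [map_add, map_sub, inner_add_left, inner_add_right, inner_sub_right,
    inner_neg_right] at hA ⊢
  rw [real_inner_comm e (S e)]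
  linarith

theorem hasDerivWithinAt_forwarding_lyapunov {P A : E →L[ℝ] E} {B : U →L[ℝ] E}
    {C : E →L[ℝ] Y} {S : H →L[ℝ] H} {Γ : Y →L[ℝ] H} {M : E →L[ℝ] H} (hP : IsSelfAdjoint P)
    (hLyap : P ∘L A + adjoint A ∘L P = -ContinuousLinearMap.id ℝ E)
    (hSyl : ∀ x, S (M x) - M (A x) = -(Γ (C x)))
    {z : ℝ → E} {w : ℝ → H} {v : U} {s : Set ℝ} {t : ℝ}
    (hz : HasDerivWithinAt z (A (z t) + B v) s t)
    (hw : HasDerivWithinAt w (S (w t) + Γ (C (z t))) s t) :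
    HasDerivWithinAt (fun τ => ⟪z τ, P (z τ)⟫ + ‖w τ - M (z τ)‖ ^ 2)
      (-‖z t‖ ^ 2 - 2 * ⟪v, -(adjoint B) (P (z t) - adjoint M (w t - M (z t)))⟫
        + 2 * ⟪S (w t - M (z t)), w t - M (z t)⟫) s t := by
  rw [← lyapunov_derivative_identity hP hLyap]
  exact (hz.inner ℝ (P.hasFDerivAt.comp_hasDerivWithinAt t hz)).add
    (hasDerivWithinAt_sub_of_sylvester hSyl hz hw).norm_sq

end Forwarding

theorem statement14_general {H : Type*} [NormedAddCommGroup H] [InnerProductSpace ℝ H]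
    [CompleteSpace H] (n m p : ℕ)
    (S : H →L[ℝ] H) (hS : ∀ h : H, ⟪S h, h⟫ ≤ 0)
    (A : EuclideanSpace ℝ (Fin n) →L[ℝ] EuclideanSpace ℝ (Fin n))
    (B : EuclideanSpace ℝ (Fin m) →L[ℝ] EuclideanSpace ℝ (Fin n))
    (C : EuclideanSpace ℝ (Fin n) →L[ℝ] EuclideanSpace ℝ (Fin p))
    (P : EuclideanSpace ℝ (Fin n) →L[ℝ] EuclideanSpace ℝ (Fin n))
    (hPsym : IsSelfAdjoint P)
    (hLyap : P ∘L A + adjoint A ∘L P = -ContinuousLinearMap.id ℝ (EuclideanSpace ℝ (Fin n)))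
    (Γ : EuclideanSpace ℝ (Fin p) →L[ℝ] H)
    (M : EuclideanSpace ℝ (Fin n) →L[ℝ] H)
    (hSyl : ∀ z : EuclideanSpace ℝ (Fin n), S (M z) - M (A z) = -(Γ (C z)))
    (σ : EuclideanSpace ℝ (Fin m) → EuclideanSpace ℝ (Fin m)) (L : ℝ)
    (hσcont : Continuous σ) (hσzero : ∀ s, σ s = 0 ↔ s = 0)
    (hσmono : ∀ s₁ s₂, 0 ≤ ⟪σ s₁ - σ s₂, s₁ - s₂⟫)
    -- the continuously differentiable closed-loop trajectory, with feedback u: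
    (z : ℝ → EuclideanSpace ℝ (Fin n)) (w : ℝ → H)
    (u : ℝ → EuclideanSpace ℝ (Fin m))
    (hu : ∀ t : ℝ, u t = -(adjoint B) (P (z t) - adjoint M (w t - M (z t))))
    (hz : ∀ t ∈ Set.Ici (0:ℝ),
      HasDerivWithinAt z (A (z t) + B (σ (u t))) (Set.Ici 0) t)
    (hw : ∀ t ∈ Set.Ici (0:ℝ),
      HasDerivWithinAt w (S (w t) + Γ (C (z t))) (Set.Ici 0) t) :
    (∀ T : ℝ, 0 ≤ T →
      (⟪z T, P (z T)⟫ + ‖w T - M (z T)‖ ^ 2)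
          + (∫ s in (0:ℝ)..T, ‖z s‖ ^ 2)
          + 2 * ∫ s in (0:ℝ)..T, ⟪σ (u s), u s⟫
        ≤ ⟪z 0, P (z 0)⟫ + ‖w 0 - M (z 0)‖ ^ 2) ∧
    AntitoneOn (fun t => ⟪z t, P (z t)⟫ + ‖w t - M (z t)‖ ^ 2) (Set.Ici 0) := by
  have hV : ∀ t ∈ Ici (0 : ℝ), HasDerivWithinAt
      (fun t => ⟪z t, P (z t)⟫ + ‖w t - M (z t)‖ ^ 2)
      (-‖z t‖ ^ 2 - 2 * ⟪σ (u t), u t⟫ + 2 * ⟪S (w t - M (z t)), w t - M (z t)⟫) (Ici 0) t :=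
    fun t ht => by
      simpa only [← hu t] using
        hasDerivWithinAt_forwarding_lyapunov hPsym hLyap hSyl (hz t ht) (hw t ht)
  have hV'_le : ∀ t, -‖z t‖ ^ 2 - 2 * ⟪σ (u t), u t⟫ + 2 * ⟪S (w t - M (z t)), w t - M (z t)⟫
      ≤ -‖z t‖ ^ 2 - 2 * ⟪σ (u t), u t⟫ := fun t => by linarith [hS (w t - M (z t))]
  have hσu : ∀ t, 0 ≤ ⟪σ (u t), u t⟫ := fun t =>
    inner_apply_self_nonneg_of_monotone hσmono ((hσzero 0).mpr rfl) (u t)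
  have hzc : ContinuousOn z (Ici 0) := fun t ht => (hz t ht).continuousWithinAt
  have hwc : ContinuousOn w (Ici 0) := fun t ht => (hw t ht).continuousWithinAt
  have huc : ContinuousOn u (Ici 0) := by rw [funext hu]; fun_prop
  refine ⟨fun T hT => ?_, antitoneOn_Ici_of_hasDerivWithinAt_nonpos hV
    fun t _ => (hV'_le t).trans (by linarith [sq_nonneg ‖z t‖, hσu t])⟩
  have hcont₁ : ContinuousOn (fun t => ‖z t‖ ^ 2) (Icc 0 T) :=
    (hzc.norm.pow 2).mono Icc_subset_Ici_self
  have hcont₂ : ContinuousOn (fun t => ⟪σ (u t), u t⟫) (Icc 0 T) :=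
    ((hσcont.comp_continuousOn huc).inner huc).mono Icc_subset_Ici_self
  have hint₁ := hcont₁.intervalIntegrable_of_Icc (μ := volume) hT
  have hint₂ := hcont₂.intervalIntegrable_of_Icc (μ := volume) hT
  have h := sub_le_integral_of_hasDerivWithinAt_Ici hT hV
    (φ := fun t => -‖z t‖ ^ 2 - 2 * ⟪σ (u t), u t⟫)
    (hcont₁.neg.sub (continuousOn_const.mul hcont₂)).integrableOn_Icc fun t _ => hV'_le t
  rw [intervalIntegral.integral_sub (f := fun t => -‖z t‖ ^ 2) hint₁.neg (hint₂.const_mul 2),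
    intervalIntegral.integral_neg, intervalIntegral.integral_const_mul] at h
  linarith

/-- Forwarding setting: along any continuously differentiable closed-loop trajectory
`(z,w)` on `[0,∞)`, the Lyapunov function `V(z,w) = zᵀPz + ‖w − Mz‖²` satisfies, for
every `T ≥ 0`, `V(z(T),w(T)) + ∫₀ᵀ|z|² + 2∫₀ᵀ σ(u)ᵀu ≤ V(z(0),w(0))`; in particular
`t ↦ V(z(t),w(t))` is nonincreasing on `[0,∞)`. -/
theorem statement14 {H : Type*} [NormedAddCommGroup H] [InnerProductSpace ℝ H]
    [CompleteSpace H] (n m p : ℕ)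
    (S : H →L[ℝ] H) (hS : ∀ h : H, ⟪S h, h⟫ ≤ 0)
    (A : EuclideanSpace ℝ (Fin n) →L[ℝ] EuclideanSpace ℝ (Fin n))
    (B : EuclideanSpace ℝ (Fin m) →L[ℝ] EuclideanSpace ℝ (Fin n))
    (C : EuclideanSpace ℝ (Fin n) →L[ℝ] EuclideanSpace ℝ (Fin p))
    (P : EuclideanSpace ℝ (Fin n) →L[ℝ] EuclideanSpace ℝ (Fin n))
    (hPsym : IsSelfAdjoint P)
    (hPpos : ∀ z : EuclideanSpace ℝ (Fin n), z ≠ 0 → 0 < ⟪P z, z⟫)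
    (hLyap : P ∘L A + adjoint A ∘L P = -ContinuousLinearMap.id ℝ (EuclideanSpace ℝ (Fin n)))
    (Γ : EuclideanSpace ℝ (Fin p) →L[ℝ] H)
    (M : EuclideanSpace ℝ (Fin n) →L[ℝ] H)
    (hSyl : ∀ z : EuclideanSpace ℝ (Fin n), S (M z) - M (A z) = -(Γ (C z)))
    (σ : EuclideanSpace ℝ (Fin m) → EuclideanSpace ℝ (Fin m)) (L : ℝ)
    (hσcont : Continuous σ) (hσzero : ∀ s, σ s = 0 ↔ s = 0)
    (hσmono : ∀ s₁ s₂, 0 ≤ ⟪σ s₁ - σ s₂, s₁ - s₂⟫)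
    (hL : 0 < L) (hσlin : ∀ s, ‖σ s‖ ≤ L * ‖s‖)
    -- the continuously differentiable closed-loop trajectory, with feedback u:
    (z : ℝ → EuclideanSpace ℝ (Fin n)) (w : ℝ → H)
    (u : ℝ → EuclideanSpace ℝ (Fin m))
    (hu : ∀ t : ℝ, u t = -(adjoint B) (P (z t) - adjoint M (w t - M (z t))))
    (hz : ∀ t ∈ Set.Ici (0:ℝ),
      HasDerivWithinAt z (A (z t) + B (σ (u t))) (Set.Ici 0) t)
    (hw : ∀ t ∈ Set.Ici (0:ℝ),
      HasDerivWithinAt w (S (w t) + Γ (C (z t))) (Set.Ici 0) t) :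
    (∀ T : ℝ, 0 ≤ T →
      (⟪z T, P (z T)⟫ + ‖w T - M (z T)‖ ^ 2)
          + (∫ s in (0:ℝ)..T, ‖z s‖ ^ 2)
          + 2 * ∫ s in (0:ℝ)..T, ⟪σ (u s), u s⟫
        ≤ ⟪z 0, P (z 0)⟫ + ‖w 0 - M (z 0)‖ ^ 2) ∧
    AntitoneOn (fun t => ⟪z t, P (z t)⟫ + ‖w t - M (z t)‖ ^ 2) (Set.Ici 0) :=
  statement14_general n m p S hS A B C P hPsym hLyap Γ M hSyl σ L hσcont hσzero hσmono z w u hu hz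
    hw
end

section
/- Let a, λ, c > 0 and M(x) = (c/(1 − exp(a/λ))) · exp((a/λ)x). Let w : [0,∞) × [0,1] → ℝ be continuously differentiable and satisfy the transport equation w_t(t,x) + λ w_x(t,x) = 0 for all t ≥ 0 and x ∈ [0,1], the boundary condition w(t,0) = w(t,1) for all t ≥ 0, and the output condition ∫₀¹ M(x) w(t,x) dx = 0 for all t ≥ 0. Then w(t,1) = 0 for all t ≥ 0. -/
/-!
Let `Φ(t) = ∫₀¹ M(x) w(t,x) dx`. Replacing `w_t` by `-λ w_x` and integrating by parts, the
relations `λM′ = aM` and `M(0) - M(1) = c` together with `w(t,0) = w(t,1)` give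
`Φ′(t) = aΦ(t) + λc · w(t,1)`. As `Φ ≡ 0`, the continuous function `w(·,1)` has vanishing
primitive, hence vanishes. To avoid differentiating under the integral sign, the identity is
used in integrated form: `∫₀ᵗ ∫₀¹ M w_t dx ds = ∫₀¹ M (w(t,·) - w(0,·)) dx` by Fubini.
-/

open MeasureTheory

/-- The forwarding gain `M(x) = (c/(1 − e^{a/λ})) e^{(a/λ)x}`, unique solution of
`λM′ = aM` on `[0,1]` with `M(0) = M(1) + c`. -/
noncomputable def Mfun (a lam c : ℝ) (x : ℝ) : ℝ :=
  (c / (1 - Real.exp (a / lam))) * Real.exp ((a / lam) * x)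

open Set intervalIntegral Function

theorem hasDerivAt_Mfun (a lam c x : ℝ) :
    HasDerivAt (Mfun a lam c) (a / lam * Mfun a lam c x) x := by
  have h := (((hasDerivAt_id x).const_mul (a / lam)).exp).const_mul (c / (1 - Real.exp (a / lam)))
  exact h.congr_deriv (by simp only [Mfun, id, mul_one]; ring)

theorem continuous_Mfun (a lam c : ℝ) : Continuous (Mfun a lam c) :=
  continuous_iff_continuousAt.mpr fun x => (hasDerivAt_Mfun a lam c x).continuousAt

theorem Mfun_zero_sub_Mfun_one {a lam : ℝ} (c : ℝ) (h : a / lam ≠ 0) :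
    Mfun a lam c 0 - Mfun a lam c 1 = c := by
  have he : 1 - Real.exp (a / lam) ≠ 0 :=
    sub_ne_zero.mpr (Ne.symm (mt (Real.exp_eq_one_iff _).mp h))
  simp only [Mfun, mul_zero, Real.exp_zero, mul_one]
  field_simp

theorem integral_Mfun_mul_deriv {a lam : ℝ} (c : ℝ) (h : a / lam ≠ 0) {g g' : ℝ → ℝ}
    (hg : ∀ x ∈ Icc (0 : ℝ) 1, HasDerivWithinAt g (g' x) (Icc 0 1) x)
    (hg' : ContinuousOn g' (Icc 0 1)) (hper : g 0 = g 1) :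
    ∫ x in (0 : ℝ)..1, Mfun a lam c x * g' x
      = -(c * g 1) - a / lam * ∫ x in (0 : ℝ)..1, Mfun a lam c x * g x := by
  rw [integral_mul_deriv_eq_deriv_mul_of_hasDerivWithinAt (u' := fun x => a / lam * Mfun a lam c x)
    (fun x _ => (hasDerivAt_Mfun a lam c x).hasDerivWithinAt) (by rwa [uIcc_of_le zero_le_one])
    (((continuous_Mfun a lam c).const_mul _).intervalIntegrable 0 1)
    (hg'.intervalIntegrable_of_Icc zero_le_one)]
  simp only [mul_assoc, intervalIntegral.integral_const_mul]
  rw [hper]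
  linear_combination -g 1 * Mfun_zero_sub_Mfun_one c h

theorem integral_Mfun_mul_of_transport {a lam : ℝ} (c : ℝ) (ha : a ≠ 0) (hlam : lam ≠ 0)
    {g g' v : ℝ → ℝ} (hg : ∀ x ∈ Icc (0 : ℝ) 1, HasDerivWithinAt g (g' x) (Icc 0 1) x)
    (hg' : ContinuousOn g' (Icc 0 1)) (hper : g 0 = g 1)
    (htransport : ∀ x ∈ Icc (0 : ℝ) 1, v x + lam * g' x = 0) :
    ∫ x in (0 : ℝ)..1, Mfun a lam c x * v x
      = lam * c * g 1 + a * ∫ x in (0 : ℝ)..1, Mfun a lam c x * g x := by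
  have hv : ∀ x ∈ uIcc (0 : ℝ) 1, Mfun a lam c x * v x = -lam * (Mfun a lam c x * g' x) := by
    intro x hx
    rw [uIcc_of_le zero_le_one] at hx
    linear_combination Mfun a lam c x * htransport x hx
  rw [integral_congr hv, intervalIntegral.integral_const_mul,
    integral_Mfun_mul_deriv c (div_ne_zero ha hlam) hg hg' hper]
  field_simp
  ring

theorem integral_integral_eq_of_hasDerivWithinAt {u u' : ℝ → ℝ → ℝ} {t₀ t₁ x₀ x₁ : ℝ}
    (ht : t₀ ≤ t₁) (hx : x₀ ≤ x₁)
    (hu : ∀ s ∈ Icc t₀ t₁, ∀ x ∈ Icc x₀ x₁, HasDerivWithinAt (u · x) (u' s x) (Icc t₀ t₁) s)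
    (hu' : ContinuousOn (uncurry u') (Icc t₀ t₁ ×ˢ Icc x₀ x₁)) :
    ∫ s in t₀..t₁, ∫ x in x₀..x₁, u' s x = ∫ x in x₀..x₁, (u t₁ x - u t₀ x) := by
  have hint : Integrable (uncurry u') ((volume.restrict (Ioc t₀ t₁)).prod
      (volume.restrict (Ioc x₀ x₁))) := by
    rw [Measure.prod_restrict, ← Measure.volume_eq_prod]
    exact (hu'.integrableOn_compact (isCompact_Icc.prod isCompact_Icc)).mono_set
      (prod_mono Ioc_subset_Icc_self Ioc_subset_Icc_self)
  have hftc : ∀ x ∈ Ioc x₀ x₁, ∫ s in Ioc t₀ t₁, u' s x = u t₁ x - u t₀ x := by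
    intro x hx
    have hx' := Ioc_subset_Icc_self hx
    rw [← integral_of_le ht]
    exact integral_eq_sub_of_hasDeriv_right_of_le ht
      (fun s hs => (hu s hs x hx').continuousWithinAt)
      (fun s hs => ((hu s (Ioo_subset_Icc_self hs) x hx').hasDerivAt
        (Icc_mem_nhds hs.1 hs.2)).hasDerivWithinAt)
      ((hu'.uncurry_right x hx').intervalIntegrable_of_Icc ht)
  simp only [integral_of_le ht, integral_of_le hx]
  rw [integral_integral_swap hint, setIntegral_congr_fun measurableSet_Ioc hftc]

theorem eqOn_zero_of_forall_integral_eq_zero {E : Type*} [NormedAddCommGroup E]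
    [NormedSpace ℝ E] [CompleteSpace E] {f : ℝ → E} {a : ℝ} (hf : ContinuousOn f (Ici a))
    (h : ∀ t ∈ Ici a, ∫ s in a..t, f s = 0) : EqOn f 0 (Ici a) := by
  intro t ht
  have hft : ContinuousOn f (Ici t) := hf.mono (Ici_subset_Ici.mpr ht)
  have hderiv : HasDerivWithinAt (fun u => ∫ s in a..u, f s) (f t) (Ici t) t :=
    integral_hasDerivWithinAt_right ((hf.mono Icc_subset_Ici_self).intervalIntegrable_of_Icc ht)
      ((hft.mono Ioi_subset_Ici_self).stronglyMeasurableAtFilter_nhdsWithin measurableSet_Ioi t)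
      ((hft t self_mem_Ici).mono Ioi_subset_Ici_self)
  have hzero : HasDerivWithinAt (fun u => ∫ s in a..u, f s) 0 (Ici t) t :=
    (hasDerivWithinAt_const t _ 0).congr (fun u hu => h u (mem_Ici.mpr (le_trans ht hu))) (h t ht)
  exact (uniqueDiffWithinAt_Ici t).eq_deriv _ hderiv hzero

/-- If a C¹ solution `w` of the transport equation `w_t + λw_x = 0` on
`[0,∞) × [0,1]` with periodic boundary condition `w(t,0) = w(t,1)` has zero forwarding
output `∫₀¹ M(x)w(t,x)dx = 0` for all `t ≥ 0`, then `w(t,1) = 0` for all `t ≥ 0`. -/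
theorem statement15 (a lam c : ℝ) (ha : 0 < a) (hlam : 0 < lam) (hc : 0 < c)
    (w wt wx : ℝ → ℝ → ℝ)
    -- w is continuously differentiable with partial derivatives wt, wx:
    (hwt : ∀ t ∈ Set.Ici (0:ℝ), ∀ x ∈ Set.Icc (0:ℝ) 1,
      HasDerivWithinAt (fun τ => w τ x) (wt t x) (Set.Ici 0) t)
    (hwx : ∀ t ∈ Set.Ici (0:ℝ), ∀ x ∈ Set.Icc (0:ℝ) 1,
      HasDerivWithinAt (fun y => w t y) (wx t x) (Set.Icc 0 1) x)
    (hwtc : ContinuousOn (fun q : ℝ × ℝ => wt q.1 q.2) (Set.Ici 0 ×ˢ Set.Icc 0 1))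
    (hwxc : ContinuousOn (fun q : ℝ × ℝ => wx q.1 q.2) (Set.Ici 0 ×ˢ Set.Icc 0 1))
    -- the transport equation:
    (hpde : ∀ t ∈ Set.Ici (0:ℝ), ∀ x ∈ Set.Icc (0:ℝ) 1, wt t x + lam * wx t x = 0)
    -- the boundary condition:
    (hbc : ∀ t ∈ Set.Ici (0:ℝ), w t 0 = w t 1)
    -- the output condition:
    (hout : ∀ t ∈ Set.Ici (0:ℝ), (∫ x in (0:ℝ)..1, Mfun a lam c x * w t x) = 0) :
    ∀ t ∈ Set.Ici (0:ℝ), w t 1 = 0 := by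
  set M := Mfun a lam c
  have hM : Continuous M := continuous_Mfun a lam c
  have houtput_deriv : ∀ s ∈ Ici (0 : ℝ), ∫ x in (0 : ℝ)..1, M x * wt s x = lam * c * w s 1 :=
    fun s hs => by
      rw [integral_Mfun_mul_of_transport c ha.ne' hlam.ne' (hwx s hs)
        (hwxc.uncurry_left s hs) (hbc s hs) (hpde s hs), hout s hs, mul_zero, add_zero]
  have hprimitive : ∀ t ∈ Ici (0 : ℝ), ∫ s in (0 : ℝ)..t, w s 1 = 0 := by
    intro t ht
    have h := integral_integral_eq_of_hasDerivWithinAt (u := fun s x => M x * w s x) ht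
      zero_le_one (fun s hs x hx => ((hwt s hs.1 x hx).mono Icc_subset_Ici_self).const_mul (M x))
      ((hM.comp continuous_snd).continuousOn.mul
        (hwtc.mono (prod_mono Icc_subset_Ici_self subset_rfl)))
    have hintegrable : ∀ s ∈ Ici (0 : ℝ), IntervalIntegrable (fun x => M x * w s x) volume 0 1 :=
      fun s hs => (hM.continuousOn.mul fun x hx => (hwx s hs x hx).continuousWithinAt)
        |>.intervalIntegrable_of_Icc zero_le_one
    rw [integral_congr fun s hs => houtput_deriv s (by rw [uIcc_of_le ht] at hs; exact hs.1),
      intervalIntegral.integral_const_mul, intervalIntegral.integral_sub (hintegrable t ht)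
        (hintegrable 0 self_mem_Ici), hout t ht, hout 0 self_mem_Ici, sub_zero] at h
    exact (mul_eq_zero.mp h).resolve_left (mul_pos hlam hc).ne'
  exact eqOn_zero_of_forall_integral_eq_zero
    (fun s hs => (hwt s hs 1 (right_mem_Icc.mpr zero_le_one)).continuousWithinAt) hprimitive
end
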